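/- arXiv:2404.04301 — 3 statements merged into one kernel-verified Lean document; each statement's English description precedes it below -/
import Mathlib

section
/- The function h(x) = ln(erfc(x)) is concave on the whole real line, where erfc(x) = 1 - (2/√π)∫₀ˣ exp(-t²)dt. -/
/-!
Write `erfc x = (2/√π) ∫ₓ^∞ e^{-t²} dt`. For a positive `C²` function `f`,
`(log f)'' = (f f'' - f'²) / f²`, so it suffices that `erfc · erfc'' ≤ erfc'²`. With
`erfc' = -(2/√π) e^{-x²}` and `erfc'' = (4/√π) x e^{-x²}` this is the Mills-ratio bound
`x ∫ₓ^∞ e^{-t²} dt ≤ ∫ₓ^∞ t e^{-t²} dt = e^{-x²}/2`.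
-/

noncomputable def erfc (x : ℝ) : ℝ :=
  1 - (2 / Real.sqrt Real.pi) * ∫ t in (0:ℝ)..x, Real.exp (-t ^ 2)

open Real MeasureTheory Set Filter

theorem concaveOn_log_of_mul_deriv2_le_sq {D : Set ℝ} (hD : Convex ℝ D) {f f' f'' : ℝ → ℝ}
    (hf : ContinuousOn f D) (hpos : ∀ x ∈ D, 0 < f x)
    (hf' : ∀ x ∈ interior D, HasDerivWithinAt f (f' x) (interior D) x)
    (hf'' : ∀ x ∈ interior D, HasDerivWithinAt f' (f'' x) (interior D) x)
    (hle : ∀ x ∈ interior D, f x * f'' x ≤ f' x ^ 2) :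
    ConcaveOn ℝ D fun x ↦ log (f x) := by
  have hne : ∀ x ∈ interior D, f x ≠ 0 := fun x hx ↦ (hpos x (interior_subset hx)).ne'
  refine concaveOn_of_hasDerivWithinAt2_nonpos hD
    (hf.log fun x hx ↦ (hpos x hx).ne') (fun x hx ↦ (hf' x hx).log (hne x hx))
    (fun x hx ↦ (hf'' x hx).div (hf' x hx) (hne x hx)) fun x hx ↦ ?_
  exact div_nonpos_of_nonpos_of_nonneg (by nlinarith [hle x hx]) (sq_nonneg _)

theorem integrable_exp_neg_sq : Integrable fun t : ℝ ↦ exp (-t ^ 2) := by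
  simpa using integrable_exp_neg_mul_sq one_pos

theorem integral_Ioi_mul_exp_neg_sq (x : ℝ) :
    ∫ t in Ioi x, t * exp (-t ^ 2) = exp (-x ^ 2) / 2 := by
  have hderiv (t : ℝ) : HasDerivAt (fun t ↦ -exp (-t ^ 2) / 2) (t * exp (-t ^ 2)) t :=
    ((hasDerivAt_pow 2 t).neg.exp.neg.div_const 2).congr_deriv
      (by simp only [Pi.neg_apply]; ring)
  have hlim : Tendsto (fun t : ℝ ↦ -exp (-t ^ 2) / 2) atTop (nhds 0) := by
    simpa using (tendsto_exp_atBot.comp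
      (tendsto_neg_atTop_atBot.comp (tendsto_pow_atTop two_ne_zero))).neg.div_const 2
  have hint : Integrable fun t : ℝ ↦ t * exp (-t ^ 2) := by
    simpa using integrable_mul_exp_neg_mul_sq one_pos
  rw [integral_Ioi_of_hasDerivAt_of_tendsto' (fun t _ ↦ hderiv t) hint.integrableOn hlim]
  ring

theorem mul_integral_Ioi_exp_neg_sq_le (x : ℝ) :
    x * ∫ t in Ioi x, exp (-t ^ 2) ≤ exp (-x ^ 2) / 2 := by
  rw [← integral_Ioi_mul_exp_neg_sq x, ← integral_const_mul]
  refine setIntegral_mono_on ?_ ?_ measurableSet_Ioi fun t ht ↦ ?_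
  · exact (integrable_exp_neg_sq.const_mul x).integrableOn
  · simpa using (integrable_mul_exp_neg_mul_sq one_pos).integrableOn
  · exact mul_le_mul_of_nonneg_right (le_of_lt ht) (exp_pos _).le

theorem erfc_eq_integral_Ioi (x : ℝ) : erfc x = 2 / √π * ∫ t in Ioi x, exp (-t ^ 2) := by
  have hhalf : ∫ t in Ioi (0 : ℝ), exp (-t ^ 2) = √π / 2 := by
    simpa using integral_gaussian_Ioi 1
  rw [erfc, ← intervalIntegral.integral_Ioi_sub_Ioi' integrable_exp_neg_sq.integrableOn
    integrable_exp_neg_sq.integrableOn, hhalf]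
  field_simp
  ring

theorem erfc_pos (x : ℝ) : 0 < erfc x := by
  have : 0 < ∫ t in Ioi x, exp (-t ^ 2) := by
    rw [setIntegral_pos_iff_support_of_nonneg_ae (.of_forall fun t ↦ (exp_pos _).le)
      integrable_exp_neg_sq.integrableOn]
    simp [Function.support, (exp_pos _).ne']
  rw [erfc_eq_integral_Ioi]
  positivity

theorem hasDerivAt_erfc (x : ℝ) : HasDerivAt erfc (-(2 / √π * exp (-x ^ 2))) x := by
  have hint := (continuous_exp.comp (continuous_pow 2).neg).integral_hasStrictDerivAt 0 x
  exact (hint.hasDerivAt.const_mul (2 / √π)).const_sub 1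

theorem hasDerivAt_neg_const_mul_exp_neg_sq (c x : ℝ) :
    HasDerivAt (fun x ↦ -(c * exp (-x ^ 2))) (2 * c * x * exp (-x ^ 2)) x :=
  ((hasDerivAt_pow 2 x).neg.exp.const_mul c).neg.congr_deriv
    (by simp only [Pi.neg_apply]; ring)

theorem erfc_mul_le_sq (x : ℝ) :
    erfc x * (2 * (2 / √π) * x * exp (-x ^ 2)) ≤ (-(2 / √π * exp (-x ^ 2))) ^ 2 :=
  calc erfc x * (2 * (2 / √π) * x * exp (-x ^ 2))
      = 8 / √π ^ 2 * exp (-x ^ 2) * (x * ∫ t in Ioi x, exp (-t ^ 2)) := by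
        rw [erfc_eq_integral_Ioi]; ring
    _ ≤ 8 / √π ^ 2 * exp (-x ^ 2) * (exp (-x ^ 2) / 2) := by
        gcongr; exact mul_integral_Ioi_exp_neg_sq_le x
    _ = (-(2 / √π * exp (-x ^ 2))) ^ 2 := by ring

theorem log_erfc_concave :
    ConcaveOn ℝ Set.univ (fun x : ℝ => Real.log (erfc x)) :=
  concaveOn_log_of_mul_deriv2_le_sq convex_univ
    (fun x _ ↦ (hasDerivAt_erfc x).continuousAt.continuousWithinAt) (fun x _ ↦ erfc_pos x)
    (fun x _ ↦ (hasDerivAt_erfc x).hasDerivWithinAt)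
    (fun x _ ↦ (hasDerivAt_neg_const_mul_exp_neg_sq _ x).hasDerivWithinAt) fun x _ ↦ erfc_mul_le_sq x
end

section
/- The function g(x) = -x² - ln(√π·x) + ln(1 - 1/(2x²)) is concave on the interval (1/√2, ∞). -/
/-!
On `x > 1/√2` the logarithms split, and up to an additive constant the function is
`h x = -x² - 3 log x + log (2x² - 1)`. With `u = 2x² > 1` its second derivative is
`-2 ((u - 1)³ + 6u - 2) / (u (u - 1)²)`, which is negative.
-/

open Real Set

lemma one_lt_two_mul_sq_of_inv_sqrt_two_lt {x : ℝ} (hx : 1 / √2 < x) : 1 < 2 * x ^ 2 := by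
  have hsq : (1 / √2) ^ 2 < x ^ 2 := pow_lt_pow_left₀ hx (by positivity) two_ne_zero
  rw [div_pow, one_pow, sq_sqrt zero_le_two] at hsq
  linarith

lemma pos_of_inv_sqrt_two_lt {x : ℝ} (hx : 1 / √2 < x) : 0 < x :=
  lt_trans (by positivity) hx

lemma log_one_sub_inv_two_mul_sq_eq {x : ℝ} (hx : 0 < x) (h : 1 < 2 * x ^ 2) :
    log (1 - 1 / (2 * x ^ 2)) = log (2 * x ^ 2 - 1) - log 2 - 2 * log x := by
  have hsub : 1 - 1 / (2 * x ^ 2) = (2 * x ^ 2 - 1) / (2 * x ^ 2) := by field_simp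
  rw [hsub, log_div (by linarith) (by positivity), log_mul two_ne_zero (by positivity), log_pow]
  push_cast
  ring

lemma hasDerivAt_two_mul_sq_sub_one (x : ℝ) :
    HasDerivAt (fun y : ℝ => 2 * y ^ 2 - 1) (4 * x) x :=
  (((hasDerivAt_pow 2 x).const_mul 2).sub_const 1).congr_deriv (by ring)

lemma hasDerivAt_reduced {x : ℝ} (hx : 0 < x) (h : 1 < 2 * x ^ 2) :
    HasDerivAt (fun y => -y ^ 2 - 3 * log y + log (2 * y ^ 2 - 1))
      (-2 * x - 3 / x + 4 * x / (2 * x ^ 2 - 1)) x :=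
  (((hasDerivAt_pow 2 x).neg.sub ((hasDerivAt_log hx.ne').const_mul 3)).add
    ((hasDerivAt_two_mul_sq_sub_one x).log (by linarith))).congr_deriv (by
      field_simp
      ring)

lemma hasDerivAt_deriv_reduced {x : ℝ} (hx : 0 < x) (h : 1 < 2 * x ^ 2) :
    HasDerivAt (fun y => -2 * y - 3 / y + 4 * y / (2 * y ^ 2 - 1))
      (-2 + 3 / x ^ 2 - 4 * (2 * x ^ 2 + 1) / (2 * x ^ 2 - 1) ^ 2) x :=
  ((((hasDerivAt_id' x).const_mul (-2)).sub ((hasDerivAt_inv hx.ne').const_mul 3)).add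
    (((hasDerivAt_id' x).const_mul 4).div (hasDerivAt_two_mul_sq_sub_one x)
      (by linarith))).congr_deriv (by
        field_simp
        ring)

lemma second_deriv_reduced_nonpos {x : ℝ} (hx : 0 < x) (h : 1 < 2 * x ^ 2) :
    -2 + 3 / x ^ 2 - 4 * (2 * x ^ 2 + 1) / (2 * x ^ 2 - 1) ^ 2 ≤ 0 := by
  set u := 2 * x ^ 2
  have hsplit : -2 + 3 / x ^ 2 - 4 * (u + 1) / (u - 1) ^ 2
      = -2 * ((u - 1) ^ 3 + 6 * u - 2) / (u * (u - 1) ^ 2) := by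
    have : u - 1 ≠ 0 := by linarith
    field_simp
    ring
  rw [hsplit]
  apply div_nonpos_of_nonpos_of_nonneg _ (by positivity)
  nlinarith [pow_pos (sub_pos.2 h) 3]

lemma concaveOn_reduced :
    ConcaveOn ℝ (Ioi (1 / √2)) (fun x => -x ^ 2 - 3 * log x + log (2 * x ^ 2 - 1)) := by
  have hD : ∀ x ∈ Ioi (1 / √2), 0 < x ∧ 1 < 2 * x ^ 2 := fun x hx =>
    ⟨pos_of_inv_sqrt_two_lt hx, one_lt_two_mul_sq_of_inv_sqrt_two_lt hx⟩
  have hD' : ∀ x ∈ interior (Ioi (1 / √2)), 0 < x ∧ 1 < 2 * x ^ 2 := fun x hx =>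
    hD x (interior_subset hx)
  exact concaveOn_of_hasDerivWithinAt2_nonpos (convex_Ioi _)
    (fun x hx => (hasDerivAt_reduced (hD x hx).1 (hD x hx).2).continuousAt.continuousWithinAt)
    (fun x hx => (hasDerivAt_reduced (hD' x hx).1 (hD' x hx).2).hasDerivWithinAt)
    (fun x hx => (hasDerivAt_deriv_reduced (hD' x hx).1 (hD' x hx).2).hasDerivWithinAt)
    (fun x hx => second_deriv_reduced_nonpos (hD' x hx).1 (hD' x hx).2)

theorem approx_concave :
    ConcaveOn ℝ (Set.Ioi (1 / Real.sqrt 2))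
      (fun x : ℝ => -x ^ 2 - Real.log (Real.sqrt Real.pi * x)
        + Real.log (1 - 1 / (2 * x ^ 2))) := by
  refine (concaveOn_reduced.add_const (-(log √π + log 2))).congr fun x hx => ?_
  have hx0 := pos_of_inv_sqrt_two_lt hx
  simp only [Pi.add_apply]
  rw [log_mul (sqrt_pos.2 pi_pos).ne' hx0.ne',
    log_one_sub_inv_two_mul_sq_eq hx0 (one_lt_two_mul_sq_of_inv_sqrt_two_lt hx)]
  ring
end

section
/- Let σ² > 0, γ > 0, η > 0, r ∈ ℝ, and V = σ² + γ + η. Then ∫₀^∞ ∫_{-∞}^∞ exp(-(r - u + v)²/(2σ²) - u²/(2γ) - v²/(2η)) du dv = π·σ·√(γη)/√V · exp(-r²/(2V)) · erfc(√η · r / √(2(γ+σ²)V)). -/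
open MeasureTheory

/-!
Completing the square in `u` writes the product of the Gaussian factors in `u` as a Gaussian in `u`
times `exp (-(r + v) ^ 2 / (2 * (σ² + γ)))`: the variances of the noise and of the random effect
add up. The same identity in `v` leaves a Gaussian of variance `(σ² + γ) η / V` centred at
`-η r / V`, times `exp (-r ^ 2 / (2 V))`, and integrating that Gaussian over the half-line gives
the `erfc` factor.
-/

open Set Real

theorem integral_comp_add_right_Ioi {E : Type*} [NormedAddCommGroup E] [NormedSpace ℝ E]
    (g : ℝ → E) (a d : ℝ) :
    ∫ x in Ioi a, g (x + d) = ∫ x in Ioi (a + d), g x := by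
  rw [← integral_indicator measurableSet_Ioi, ← integral_indicator measurableSet_Ioi,
    ← integral_add_right_eq_self (indicator (Ioi (a + d)) g) d]
  congr 1 with x
  simp only [indicator_apply, mem_Ioi, add_lt_add_iff_right]

theorem integral_Ioi_exp_neg_sq (c : ℝ) :
    ∫ t in Ioi c, exp (-t ^ 2) = √π / 2 * erfc c := by
  have hint : Integrable fun t : ℝ => exp (-t ^ 2) := by
    simpa using integrable_exp_neg_mul_sq (b := 1) one_pos
  have hsplit := intervalIntegral.integral_interval_add_Ioi (a := 0) (b := c)
    hint.integrableOn hint.integrableOn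
  have hhalf : ∫ t in Ioi (0:ℝ), exp (-t ^ 2) = √π / 2 := by
    simpa using integral_gaussian_Ioi 1
  have hπ : 0 < √π := sqrt_pos.mpr pi_pos
  rw [erfc]
  field_simp
  linarith

theorem integral_exp_neg_sq_add_div (m : ℝ) {s : ℝ} (hs : 0 < s) :
    ∫ u, exp (-(u + m) ^ 2 / (2 * s)) = √(2 * π * s) := by
  rw [integral_add_right_eq_self (fun u => exp (-u ^ 2 / (2 * s))) m]
  simp_rw [neg_div, div_eq_inv_mul _ (2 * s), ← neg_mul, integral_gaussian]
  congr 1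
  field_simp

theorem integral_Ioi_exp_neg_sq_add_div (c : ℝ) {s : ℝ} (hs : 0 < s) :
    ∫ v in Ioi 0, exp (-(v + c) ^ 2 / (2 * s)) = √(2 * π * s) / 2 * erfc (c / √(2 * s)) := by
  have hk : 0 < √(2 * s) := sqrt_pos.mpr (by positivity)
  calc ∫ v in Ioi 0, exp (-(v + c) ^ 2 / (2 * s))
      = ∫ v in Ioi c, exp (-(v * (√(2 * s))⁻¹) ^ 2) := by
        rw [integral_comp_add_right_Ioi (fun v => exp (-v ^ 2 / (2 * s))), zero_add]
        refine setIntegral_congr_fun measurableSet_Ioi fun v _ => ?_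
        rw [mul_pow, inv_pow, sq_sqrt (by positivity)]
        ring_nf
    _ = √(2 * s) / 2 * (√π * erfc (c / √(2 * s))) := by
        rw [integral_comp_mul_right_Ioi (fun t => exp (-t ^ 2)) c (inv_pos.mpr hk),
          integral_Ioi_exp_neg_sq, smul_eq_mul, inv_inv, ← div_eq_mul_inv]
        ring
    _ = _ := by
        rw [mul_right_comm, sqrt_mul (by positivity) π]
        ring

theorem gaussian_product_exponent_eq (x u : ℝ) {p q : ℝ} (hp : 0 < p) (hq : 0 < q) :
    -(x + u) ^ 2 / (2 * p) - u ^ 2 / (2 * q)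
      = -(u + q * x / (p + q)) ^ 2 / (2 * (p * q / (p + q))) - x ^ 2 / (2 * (p + q)) := by
  have : 0 < p + q := by positivity
  field_simp
  ring

theorem exp_gaussian_product_eq (x u : ℝ) {p q : ℝ} (hp : 0 < p) (hq : 0 < q) :
    exp (-(x + u) ^ 2 / (2 * p) - u ^ 2 / (2 * q))
      = exp (-(u + q * x / (p + q)) ^ 2 / (2 * (p * q / (p + q))))
        * exp (-x ^ 2 / (2 * (p + q))) := by
  rw [gaussian_product_exponent_eq x u hp hq, ← exp_add, neg_div _ (x ^ 2), sub_eq_add_neg]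

theorem integral_exp_gaussian_product (x : ℝ) {p q : ℝ} (hp : 0 < p) (hq : 0 < q) :
    ∫ u, exp (-(x + u) ^ 2 / (2 * p) - u ^ 2 / (2 * q))
      = √(2 * π * (p * q / (p + q))) * exp (-x ^ 2 / (2 * (p + q))) := by
  simp_rw [exp_gaussian_product_eq x _ hp hq, integral_mul_const,
    integral_exp_neg_sq_add_div _ (by positivity : 0 < p * q / (p + q))]

theorem integral_Ioi_exp_gaussian_product (x : ℝ) {p q : ℝ} (hp : 0 < p) (hq : 0 < q) :
    ∫ v in Ioi 0, exp (-(x + v) ^ 2 / (2 * p) - v ^ 2 / (2 * q))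
      = √(2 * π * (p * q / (p + q))) / 2 * exp (-x ^ 2 / (2 * (p + q)))
        * erfc (√q * x / √(2 * p * (p + q))) := by
  have hpq : 0 < p + q := by positivity
  have hs : √(2 * (p * q / (p + q))) = √q * √(2 * p * (p + q)) / (p + q) := by
    rw [← sqrt_mul hq.le, eq_div_iff hpq.ne', ← sqrt_sq hpq.le, ← sqrt_mul (by positivity),
      sqrt_sq hpq.le]
    congr 1
    field_simp
  have harg : q * x / (p + q) / √(2 * (p * q / (p + q))) = √q * x / √(2 * p * (p + q)) := by
    have : 0 < √q := sqrt_pos.mpr hq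
    have : 0 < √(2 * p * (p + q)) := sqrt_pos.mpr (by positivity)
    rw [hs]
    field_simp
    rw [sq_sqrt hq.le, mul_comm]
  simp_rw [exp_gaussian_product_eq x _ hp hq, integral_mul_const,
    integral_Ioi_exp_neg_sq_add_div _ (by positivity : 0 < p * q / (p + q)), harg]
  ring

theorem sfma_marginalization (σ2 γ η r : ℝ) (hσ : 0 < σ2) (hγ : 0 < γ) (hη : 0 < η) :
    (∫ v in Set.Ioi (0:ℝ), ∫ u : ℝ,
        Real.exp (-(r - u + v) ^ 2 / (2 * σ2) - u ^ 2 / (2 * γ) - v ^ 2 / (2 * η)))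
      = Real.pi * Real.sqrt σ2 * Real.sqrt (γ * η) / Real.sqrt (σ2 + γ + η)
          * Real.exp (-r ^ 2 / (2 * (σ2 + γ + η)))
          * erfc (Real.sqrt η * r / Real.sqrt (2 * (γ + σ2) * (σ2 + γ + η))) := by
  have inner (v : ℝ) : ∫ u, exp (-(r - u + v) ^ 2 / (2 * σ2) - u ^ 2 / (2 * γ) - v ^ 2 / (2 * η))
      = √(2 * π * (σ2 * γ / (σ2 + γ)))
        * exp (-(r + v) ^ 2 / (2 * (σ2 + γ)) - v ^ 2 / (2 * η)) := by
    have hsplit (u : ℝ) : exp (-(r - u + v) ^ 2 / (2 * σ2) - u ^ 2 / (2 * γ) - v ^ 2 / (2 * η))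
        = exp (-(-(r + v) + u) ^ 2 / (2 * σ2) - u ^ 2 / (2 * γ)) * exp (-v ^ 2 / (2 * η)) := by
      rw [← exp_add]
      ring_nf
    simp_rw [hsplit, integral_mul_const, integral_exp_gaussian_product _ hσ hγ, mul_assoc,
      ← exp_add]
    ring_nf
  have hconst : √(2 * π * (σ2 * γ / (σ2 + γ))) * √(2 * π * ((σ2 + γ) * η / (σ2 + γ + η))) / 2
      = π * √σ2 * √(γ * η) / √(σ2 + γ + η) := by
    rw [← sqrt_mul (by positivity), show 2 * π * (σ2 * γ / (σ2 + γ)) * (2 * π * ((σ2 + γ) * η / (σ2 + γ + η)))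
      = (2 * π) ^ 2 * σ2 * (γ * η) / (σ2 + γ + η) by field_simp, sqrt_div' _ (by positivity),
      sqrt_mul' _ (by positivity), sqrt_mul' _ (by positivity), sqrt_sq (by positivity)]
    ring
  rw [setIntegral_congr_fun measurableSet_Ioi fun v _ => inner v, integral_const_mul,
    integral_Ioi_exp_gaussian_product r (by positivity) hη, add_comm γ σ2, ← hconst]
  ring
end
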